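/- Let N be a positive integer, s, Δs ∈ ℂ^N with ‖s‖² = N, and λ ∈ ℝ with λ > 1. If ‖s + Δs‖ = ‖s + λ·Δs‖, then |⟨s, s + Δs⟩|² − |⟨s, s + λ·Δs⟩|² = (1 − λ²)·(|⟨s, Δs⟩|² − N·‖Δs‖²) and this quantity is nonnegative; moreover it equals zero if and only if Δs and s are ℂ-linearly dependent (Δs is a complex scalar multiple of s). (Identity (ap7) with its sign analysis from the proof of Theorem 1.) -/

import Mathlib

/-!
Write `a = ⟪s, Δs⟫`. Since `⟪s, s⟫ = ‖s‖²` is real,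
`‖⟪s, s + t Δs⟫‖² = ‖s‖⁴ + 2 t ‖s‖² Re a + t² ‖a‖²` for real `t`, while
`‖s + t Δs‖² = ‖s‖² + 2 t Re a + t² ‖Δs‖²`. Equating the latter at `t = 1` and `t = λ` gives
`2 (1 - λ) Re a = (λ² - 1) ‖Δs‖²`, which eliminates `Re a` from the difference of the former and
leaves `(1 - λ²) (‖a‖² - ‖s‖² ‖Δs‖²)`. Both factors are `≤ 0` for `λ > 1` (the second by
Cauchy–Schwarz), and the product vanishes exactly in the equality case of Cauchy–Schwarz.
-/

open RCLike

theorem RCLike.sq_norm_ofReal_add {𝕜 : Type*} [RCLike 𝕜] (r : ℝ) (z : 𝕜) :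
    ‖(r : 𝕜) + z‖ ^ 2 = r ^ 2 + 2 * r * re z + ‖z‖ ^ 2 := by
  rw [norm_add_sq (𝕜 := 𝕜), inner_apply, conj_ofReal, re_mul_ofReal, norm_ofReal, sq_abs]
  ring

section InnerProductSpace

variable {𝕜 E : Type*} [RCLike 𝕜] [NormedAddCommGroup E] [InnerProductSpace 𝕜 E]

local notation "⟪" x ", " y "⟫" => inner 𝕜 x y

theorem norm_add_ofReal_smul_sq (s d : E) (t : ℝ) :
    ‖s + (t : 𝕜) • d‖ ^ 2 = ‖s‖ ^ 2 + 2 * t * re ⟪s, d⟫ + t ^ 2 * ‖d‖ ^ 2 := by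
  rw [norm_add_sq (𝕜 := 𝕜), inner_smul_right, re_ofReal_mul, norm_smul, norm_ofReal, mul_pow,
    sq_abs]
  ring

theorem sq_norm_inner_add_ofReal_smul (s d : E) (t : ℝ) :
    ‖⟪s, s + (t : 𝕜) • d⟫‖ ^ 2
      = ‖s‖ ^ 4 + 2 * t * ‖s‖ ^ 2 * re ⟪s, d⟫ + t ^ 2 * ‖⟪s, d⟫‖ ^ 2 := by
  rw [inner_add_right, inner_smul_right, inner_self_eq_norm_sq_to_K, ← ofReal_pow,
    sq_norm_ofReal_add, re_ofReal_mul, norm_mul, norm_ofReal, mul_pow, sq_abs]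
  ring

theorem sq_norm_inner_sub_of_norm_add_eq (s d : E) (l : ℝ)
    (h : ‖s + d‖ = ‖s + (l : 𝕜) • d‖) :
    ‖⟪s, s + d⟫‖ ^ 2 - ‖⟪s, s + (l : 𝕜) • d⟫‖ ^ 2
      = (1 - l ^ 2) * (‖⟪s, d⟫‖ ^ 2 - ‖s‖ ^ 2 * ‖d‖ ^ 2) := by
  have h₁ := norm_add_ofReal_smul_sq (𝕜 := 𝕜) s d 1
  have h₁' := sq_norm_inner_add_ofReal_smul (𝕜 := 𝕜) s d 1
  simp only [ofReal_one, one_smul] at h₁ h₁'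
  have hₗ := norm_add_ofReal_smul_sq (𝕜 := 𝕜) s d l
  have hₗ' := sq_norm_inner_add_ofReal_smul (𝕜 := 𝕜) s d l
  have hre : 2 * (1 - l) * re ⟪s, d⟫ = (l ^ 2 - 1) * ‖d‖ ^ 2 := by
    rw [h] at h₁
    linear_combination hₗ - h₁
  linear_combination h₁' - hₗ' + ‖s‖ ^ 2 * hre

theorem sq_norm_inner_eq_iff_exists_smul {s : E} (hs : s ≠ 0) (d : E) :
    ‖⟪s, d⟫‖ ^ 2 = ‖s‖ ^ 2 * ‖d‖ ^ 2 ↔ ∃ c : 𝕜, d = c • s := by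
  rw [← mul_pow, pow_left_inj₀ (norm_nonneg _) (by positivity : 0 ≤ ‖s‖ * ‖d‖) two_ne_zero]
  exact ((norm_inner_eq_norm_tfae 𝕜 s d).out 0 2).trans (or_iff_right hs)

theorem sq_norm_inner_sub_nonneg_of_norm_add_eq (s d : E) {l : ℝ} (hl : 1 < l)
    (h : ‖s + d‖ = ‖s + (l : 𝕜) • d‖) :
    0 ≤ ‖⟪s, s + d⟫‖ ^ 2 - ‖⟪s, s + (l : 𝕜) • d⟫‖ ^ 2 := by
  have hcs : ‖⟪s, d⟫‖ ^ 2 ≤ ‖s‖ ^ 2 * ‖d‖ ^ 2 := by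
    rw [← mul_pow]
    gcongr
    exact norm_inner_le_norm s d
  rw [sq_norm_inner_sub_of_norm_add_eq s d l h]
  exact mul_nonneg_of_nonpos_of_nonpos (by nlinarith) (by linarith)

theorem sq_norm_inner_sub_eq_zero_iff_of_norm_add_eq {s : E} (hs : s ≠ 0) (d : E) {l : ℝ}
    (hl : 1 < l) (h : ‖s + d‖ = ‖s + (l : 𝕜) • d‖) :
    ‖⟪s, s + d⟫‖ ^ 2 - ‖⟪s, s + (l : 𝕜) • d⟫‖ ^ 2 = 0 ↔ ∃ c : 𝕜, d = c • s := by
  have hl₂ : 1 - l ^ 2 ≠ 0 := by nlinarith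
  rw [sq_norm_inner_sub_of_norm_add_eq s d l h, mul_eq_zero, or_iff_right hl₂, sub_eq_zero,
    sq_norm_inner_eq_iff_exists_smul hs]

end InnerProductSpace

/-- Identity (ap7) with its sign analysis, from the proof of Theorem 1. -/
theorem stmt_3 (N : ℕ) (hN : 0 < N) (s Δs : EuclideanSpace ℂ (Fin N))
    (hs : ‖s‖ ^ 2 = (N : ℝ)) (l : ℝ) (hl : 1 < l)
    (h : ‖s + Δs‖ = ‖s + l • Δs‖) :
    (‖(inner ℂ s (s + Δs) : ℂ)‖ ^ 2
        - ‖(inner ℂ s (s + l • Δs) : ℂ)‖ ^ 2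
      = (1 - l ^ 2) * (‖(inner ℂ s Δs : ℂ)‖ ^ 2 - N * ‖Δs‖ ^ 2))
    ∧ 0 ≤ ‖(inner ℂ s (s + Δs) : ℂ)‖ ^ 2
        - ‖(inner ℂ s (s + l • Δs) : ℂ)‖ ^ 2
    ∧ (‖(inner ℂ s (s + Δs) : ℂ)‖ ^ 2
        - ‖(inner ℂ s (s + l • Δs) : ℂ)‖ ^ 2 = 0
      ↔ ∃ c : ℂ, Δs = c • s) := by
  have hs₀ : s ≠ 0 := by
    rintro rfl
    rw [norm_zero, zero_pow two_ne_zero] at hs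
    exact hN.ne (mod_cast hs)
  rw [← Complex.coe_smul] at h ⊢
  rw [← hs]
  exact ⟨sq_norm_inner_sub_of_norm_add_eq s Δs l h,
    sq_norm_inner_sub_nonneg_of_norm_add_eq s Δs hl h,
    sq_norm_inner_sub_eq_zero_iff_of_norm_add_eq hs₀ Δs hl h⟩
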